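/- arXiv:math/9802013 — 4 statements merged into one kernel-verified Lean document; each statement's English description precedes it below -/
import Mathlib

section
/- Let u₁, u₂, u₃, u₄, u, a, b, c, d be nonzero complex numbers such that u₁, u₂, u₃, u₄ are pairwise distinct and ad − bc ≠ 0. Set pᵢ = (uᵢ, a, b) ∈ ℂ³ for 1 ≤ i ≤ 4 and p₅ = (u, c, d) ∈ ℂ³. Then for every j ∈ {1, 2, 3, 4, 5} there exists a homogeneous polynomial F of degree 3 in ℂ[U, X, Y], all of whose monomials lie in the set {U³, U²X, U²Y, UX², UXY, UY², X³, Y³}, such that F(pᵢ) = 0 for all i ≠ j and F(p_j) ≠ 0. -/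
/-!
The cubics supported on the allowed monomials are exactly the cubic forms without `X²Y` and
`XY²` terms; among them are all cubic forms in `U, X` alone and `U²` times any linear form.
The cubic `U²(bX - aY)` vanishes on the line `bX = aY` through `p₁, …, p₄` but not at `p₅`.
For `j ≤ 4`, the product of the forms `aU - uᵢX` over the three `i ≠ j` vanishes at those
three points and not at `p_j`; subtracting a multiple of `U²(bX - aY)` makes it vanish at `p₅`
without changing it on the line.
-/

open MvPolynomial

/-- The allowed cubic monomials `U³, U²X, U²Y, UX², UXY, UY², X³, Y³` in the
variables `U = X 0`, `X = X 1`, `Y = X 2`, given by their exponent vectors. -/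
def allowedCubicMonomials : Set (Fin 3 →₀ ℕ) :=
  { Finsupp.single 0 3,
    Finsupp.single 0 2 + Finsupp.single 1 1,
    Finsupp.single 0 2 + Finsupp.single 2 1,
    Finsupp.single 0 1 + Finsupp.single 1 2,
    Finsupp.single 0 1 + Finsupp.single 1 1 + Finsupp.single 2 1,
    Finsupp.single 0 1 + Finsupp.single 2 2,
    Finsupp.single 1 3,
    Finsupp.single 2 3 }

section AllowedCubics

variable (R : Type*) [CommSemiring R]

noncomputable def allowedCubics : Submodule R (MvPolynomial (Fin 3) R) :=
  restrictSupport R allowedCubicMonomials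

variable {R}

lemma degree_eq_three_of_mem_allowedCubicMonomials {m : Fin 3 →₀ ℕ}
    (hm : m ∈ allowedCubicMonomials) : m.degree = 3 := by
  simp only [allowedCubicMonomials, Set.mem_insert_iff, Set.mem_singleton_iff] at hm
  rcases hm with rfl | rfl | rfl | rfl | rfl | rfl | rfl | rfl <;> simp

lemma isHomogeneous_of_mem_allowedCubics {F : MvPolynomial (Fin 3) R}
    (hF : F ∈ allowedCubics R) : F.IsHomogeneous 3 := by
  rw [← mem_homogeneousSubmodule, homogeneousSubmodule_eq_finsupp_supported]
  exact AddMonoidAlgebra.supported_mono (fun _ ↦ degree_eq_three_of_mem_allowedCubicMonomials) hF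

lemma mem_allowedCubicMonomials_of_degree_eq_three {m : Fin 3 →₀ ℕ} (hm : m.degree = 3)
    (h : m 0 = 0 → m 1 = 0 ∨ m 2 = 0) : m ∈ allowedCubicMonomials := by
  have hsum : m 0 + m 1 + m 2 = 3 := by
    rwa [Finsupp.degree_eq_sum, Fin.sum_univ_three] at hm
  have hm_eq : m = Finsupp.single 0 (m 0) + Finsupp.single 1 (m 1) + Finsupp.single 2 (m 2) := by
    ext i; fin_cases i <;> simp
  rw [hm_eq]
  generalize m 0 = i, m 1 = j, m 2 = k at hsum h
  obtain rfl : k = 3 - i - j := by omega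
  have : i ≤ 3 := by omega
  have : j ≤ 3 := by omega
  interval_cases i <;> interval_cases j <;> (try omega) <;> simp [allowedCubicMonomials]

lemma mem_allowedCubics_of_isHomogeneous {F : MvPolynomial (Fin 3) R} (hF : F.IsHomogeneous 3)
    (h : ∀ m ∈ F.support, m 0 = 0 → m 1 = 0 ∨ m 2 = 0) : F ∈ allowedCubics R := fun m hm ↦
  mem_allowedCubicMonomials_of_degree_eq_three
    (by rw [Finsupp.degree_eq_weight_one]; exact hF (mem_support_iff.1 hm)) (h m hm)

lemma mem_allowedCubics_of_mem_supported {F : MvPolynomial (Fin 3) R} (hF : F.IsHomogeneous 3)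
    (hvars : F ∈ supported R {0, 1}) : F ∈ allowedCubics R := by
  refine mem_allowedCubics_of_isHomogeneous hF fun m hm _ ↦ Or.inr ?_
  by_contra h2
  have : (2 : Fin 3) ∈ F.vars :=
    (mem_vars_iff_mem_support 2).2 ⟨m, hm, Finsupp.mem_support_iff.2 h2⟩
  simpa using (mem_supported.1 hvars) this

lemma X_zero_sq_mul_mem_allowedCubics {ℓ : MvPolynomial (Fin 3) R} (hℓ : ℓ.IsHomogeneous 1) :
    X 0 ^ 2 * ℓ ∈ allowedCubics R := by
  refine mem_allowedCubics_of_isHomogeneous ((isHomogeneous_X_pow 0 2).mul hℓ)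
    fun m hm h0 ↦ absurd h0 ?_
  rw [mem_support_iff, X_pow_eq_monomial, coeff_monomial_mul'] at hm
  have hle : Finsupp.single 0 2 ≤ m := by by_contra h; simp [h] at hm
  have : 2 ≤ m 0 := by simpa using hle 0
  omega

end AllowedCubics

lemma exists_mem_eval_eq_zero_of_eval_ne_zero {K σ : Type*} [Field K]
    {S : Submodule K (MvPolynomial σ K)} {G H : MvPolynomial σ K} (hG : G ∈ S) (hH : H ∈ S)
    {p : σ → K} (hp : eval p H ≠ 0) :
    ∃ F ∈ S, eval p F = 0 ∧ ∀ q, eval q H = 0 → eval q F = eval q G := by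
  refine ⟨G - (eval p G / eval p H) • H, S.sub_mem hG (S.smul_mem _ hH), ?_, fun q hq ↦ ?_⟩
  · simp [smul_eq_C_mul, div_mul_cancel₀ _ hp]
  · simp [smul_eq_C_mul, hq]

section Separation

variable {K : Type*} [Field K]

lemma eval_X_zero_sq_mul_line (a b w x y : K) :
    eval ![w, x, y] (X 0 ^ 2 * (C b * X 1 - C a * X 2)) = w ^ 2 * (b * x - a * y) := by
  simp

lemma eval_X_zero_sq_mul_line_ne_zero {a b c d u : K} (hu : u ≠ 0) (hdet : a * d - b * c ≠ 0) :
    eval ![u, c, d] (X 0 ^ 2 * (C b * X 1 - C a * X 2)) ≠ 0 := by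
  rw [eval_X_zero_sq_mul_line]
  exact mul_ne_zero (pow_ne_zero 2 hu) fun h ↦ hdet (by linear_combination -h)

lemma X_zero_sq_mul_line_mem_allowedCubics (a b : K) :
    X 0 ^ 2 * (C b * X 1 - C a * X 2) ∈ allowedCubics K :=
  X_zero_sq_mul_mem_allowedCubics ((isHomogeneous_C_mul_X b 1).sub (isHomogeneous_C_mul_X a 2))

lemma prod_erase_mem_allowedCubics (a : K) (v : Fin 4 → K) (j : Fin 4) :
    ∏ i ∈ Finset.univ.erase j, (C a * X 0 - C (v i) * X 1) ∈ allowedCubics K := by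
  refine mem_allowedCubics_of_mem_supported ?_ (Subalgebra.prod_mem _ fun i _ ↦ ?_)
  · have h := IsHomogeneous.prod (σ := Fin 3) (Finset.univ.erase j) _ (fun _ ↦ 1) fun i _ ↦
      (isHomogeneous_C_mul_X a 0).sub (isHomogeneous_C_mul_X (v i) 1)
    simpa using h
  · exact Subalgebra.sub_mem _
      (Subalgebra.mul_mem _ (Subalgebra.algebraMap_mem _ a) (X_mem_supported.2 (by simp)))
      (Subalgebra.mul_mem _ (Subalgebra.algebraMap_mem _ (v i)) (X_mem_supported.2 (by simp)))

lemma exists_mem_allowedCubics_separating_collinear {v : Fin 4 → K} (hv : Function.Injective v)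
    {a b c d u : K} (ha : a ≠ 0) (hu : u ≠ 0) (hdet : a * d - b * c ≠ 0) (j : Fin 4) :
    ∃ F ∈ allowedCubics K, (∀ i ≠ j, eval ![v i, a, b] F = 0) ∧ eval ![u, c, d] F = 0 ∧
      eval ![v j, a, b] F ≠ 0 := by
  obtain ⟨F, hF, hF_eval, hF_eq⟩ := exists_mem_eval_eq_zero_of_eval_ne_zero
    (prod_erase_mem_allowedCubics a v j) (X_zero_sq_mul_line_mem_allowedCubics a b)
    (eval_X_zero_sq_mul_line_ne_zero hu hdet)
  have hF_line (w : K) : eval ![w, a, b] F = ∏ i ∈ Finset.univ.erase j, a * (w - v i) := by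
    rw [hF_eq _ (by rw [eval_X_zero_sq_mul_line]; ring), eval_prod]
    exact Finset.prod_congr rfl fun i _ ↦ by simp [mul_sub, mul_comm]
  refine ⟨F, hF, fun i hi ↦ ?_, hF_eval, ?_⟩
  · rw [hF_line]
    exact Finset.prod_eq_zero (Finset.mem_erase.2 ⟨hi, Finset.mem_univ i⟩) (by simp)
  · rw [hF_line]
    exact Finset.prod_ne_zero_iff.2 fun i hi ↦
      mul_ne_zero ha (sub_ne_zero.2 (hv.ne (Finset.ne_of_mem_erase hi).symm))

end Separation

theorem five_points_separated_by_allowed_cubics_general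
    (u₁ u₂ u₃ u₄ u a b c d : ℂ)
    (hu : u ≠ 0)
    (ha : a ≠ 0)
    (h₁₂ : u₁ ≠ u₂) (h₁₃ : u₁ ≠ u₃) (h₁₄ : u₁ ≠ u₄)
    (h₂₃ : u₂ ≠ u₃) (h₂₄ : u₂ ≠ u₄) (h₃₄ : u₃ ≠ u₄)
    (hdet : a * d - b * c ≠ 0) :
    ∀ j : Fin 5, ∃ F : MvPolynomial (Fin 3) ℂ,
      F.IsHomogeneous 3 ∧
      (F.support : Set (Fin 3 →₀ ℕ)) ⊆ allowedCubicMonomials ∧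
      (∀ i : Fin 5, i ≠ j →
        MvPolynomial.eval
          (![![u₁, a, b], ![u₂, a, b], ![u₃, a, b], ![u₄, a, b], ![u, c, d]] i) F = 0) ∧
      MvPolynomial.eval
        (![![u₁, a, b], ![u₂, a, b], ![u₃, a, b], ![u₄, a, b], ![u, c, d]] j) F ≠ 0 := by
  set P := ![![u₁, a, b], ![u₂, a, b], ![u₃, a, b], ![u₄, a, b], ![u, c, d]]
  set v := ![u₁, u₂, u₃, u₄]
  have hv : Function.Injective v := by
    intro i k; fin_cases i <;> fin_cases k <;> simp_all [v, eq_comm]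
  have hP_line (i : Fin 4) : P i.castSucc = ![v i, a, b] := by fin_cases i <;> rfl
  have hP_last : P (Fin.last 4) = ![u, c, d] := rfl
  suffices ∀ j, ∃ F ∈ allowedCubics ℂ, (∀ i ≠ j, eval (P i) F = 0) ∧ eval (P j) F ≠ 0 by
    intro j
    obtain ⟨F, hF, hF_eval⟩ := this j
    exact ⟨F, isHomogeneous_of_mem_allowedCubics hF, hF, hF_eval⟩
  intro j
  induction j using Fin.lastCases with
  | last =>
    refine ⟨_, X_zero_sq_mul_line_mem_allowedCubics a b, fun i hi ↦ ?_, ?_⟩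
    · obtain ⟨i, rfl⟩ := Fin.exists_castSucc_eq.2 hi
      rw [hP_line, eval_X_zero_sq_mul_line]
      ring
    · rw [hP_last]
      exact eval_X_zero_sq_mul_line_ne_zero hu hdet
  | cast k =>
    obtain ⟨F, hF, hF_line, hF_last, hF_k⟩ :=
      exists_mem_allowedCubics_separating_collinear hv ha hu hdet k
    refine ⟨F, hF, fun i hi ↦ ?_, by rwa [hP_line]⟩
    induction i using Fin.lastCases with
    | last => rwa [hP_last]
    | cast i => rw [hP_line]; exact hF_line i fun h ↦ hi (h ▸ rfl)

/-- Lemma 3.3: the five points `pᵢ = (uᵢ, a, b)` (1 ≤ i ≤ 4) and `p₅ = (u, c, d)`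
can be separated by cubics supported on the allowed monomials. -/
theorem five_points_separated_by_allowed_cubics
    (u₁ u₂ u₃ u₄ u a b c d : ℂ)
    (hu₁ : u₁ ≠ 0) (hu₂ : u₂ ≠ 0) (hu₃ : u₃ ≠ 0) (hu₄ : u₄ ≠ 0) (hu : u ≠ 0)
    (ha : a ≠ 0) (hb : b ≠ 0) (hc : c ≠ 0) (hd : d ≠ 0)
    (h₁₂ : u₁ ≠ u₂) (h₁₃ : u₁ ≠ u₃) (h₁₄ : u₁ ≠ u₄)
    (h₂₃ : u₂ ≠ u₃) (h₂₄ : u₂ ≠ u₄) (h₃₄ : u₃ ≠ u₄)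
    (hdet : a * d - b * c ≠ 0) :
    ∀ j : Fin 5, ∃ F : MvPolynomial (Fin 3) ℂ,
      F.IsHomogeneous 3 ∧
      (F.support : Set (Fin 3 →₀ ℕ)) ⊆ allowedCubicMonomials ∧
      (∀ i : Fin 5, i ≠ j →
        MvPolynomial.eval
          (![![u₁, a, b], ![u₂, a, b], ![u₃, a, b], ![u₄, a, b], ![u, c, d]] i) F = 0) ∧
      MvPolynomial.eval
        (![![u₁, a, b], ![u₂, a, b], ![u₃, a, b], ![u₄, a, b], ![u, c, d]] j) F ≠ 0 :=
  five_points_separated_by_allowed_cubics_general u₁ u₂ u₃ u₄ u a b c d hu ha h₁₂ h₁₃ h₁₄ h₂₃ h₂₄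
    h₃₄ hdet
end

section
/- Let a, b, c, d, u be nonzero complex numbers with ad − bc ≠ 0, and let u₁, u₂, u₃, u₄ be complex numbers with u₄ ∉ {u₁, u₂, u₃}. Then there exist complex numbers a₁₀, a₀₁, a₂₀, a₁₁, a₀₂, a₃₀, a₀₃ such that the homogeneous cubic F = U³ + a₁₀U²X + a₀₁U²Y + a₂₀UX² + a₁₁UXY + a₀₂UY² + a₃₀X³ + a₀₃Y³ in ℂ[U, X, Y] satisfies F(uᵢ, a, b) = 0 for i = 1, 2, 3, F(u, c, d) = 0, and F(u₄, a, b) ≠ 0. -/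
/-!
On the line through `(a, b)` the cubic restricts to `t³ + L(a,b) t² + Q(a,b) t + K(a,b)`, where
`L`, `Q`, `K = a₃₀ X³ + a₀₃ Y³` are its parts of degree one, two and three in `(X, Y)`, and at
`(u, c, d)` it takes the value `u³ + L(c,d) u² + Q(c,d) u + K(c,d)`. Since `(a, b)` and `(c, d)`
are independent, linear and quadratic forms can be given arbitrary values at both points. Take
`K = (-u₁u₂u₃ / a³) X³`, make `L(a,b), Q(a,b)` the other elementary symmetric functions of
`-u₁, -u₂, -u₃`, and use `u ≠ 0` to absorb `u³ + K(c,d)` into `Q(c,d)`. Then the cubic is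
`(t - u₁)(t - u₂)(t - u₃)` along the line, which vanishes at `u₁, u₂, u₃` but not at `u₄`.
-/

open MvPolynomial

section BinaryForms

variable {K : Type*} [Field K] {a b c d : K}

theorem exists_linear_form_eq_of_det_ne_zero (hdet : a * d - b * c ≠ 0) (s s' : K) :
    ∃ l₁ l₂ : K, l₁ * a + l₂ * b = s ∧ l₁ * c + l₂ * d = s' :=
  ⟨(s * d - s' * b) / (a * d - b * c), (s' * a - s * c) / (a * d - b * c),
    by rw [div_mul_eq_mul_div, div_mul_eq_mul_div, ← add_div, div_eq_iff hdet]; ring,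
    by rw [div_mul_eq_mul_div, div_mul_eq_mul_div, ← add_div, div_eq_iff hdet]; ring⟩

theorem exists_quadratic_form_eq_of_det_ne_zero (hdet : a * d - b * c ≠ 0) (s s' : K) :
    ∃ A B C : K, A * a ^ 2 + B * (a * b) + C * b ^ 2 = s ∧
      A * c ^ 2 + B * (c * d) + C * d ^ 2 = s' := by
  obtain ⟨l₁, l₂, hl, hl'⟩ := exists_linear_form_eq_of_det_ne_zero hdet 1 0
  obtain ⟨m₁, m₂, hm, hm'⟩ := exists_linear_form_eq_of_det_ne_zero hdet 0 1
  -- the form `s l² + s' m²`, where `l` and `m` vanish at `(c, d)` and `(a, b)` respectively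
  refine ⟨s * l₁ ^ 2 + s' * m₁ ^ 2, 2 * (s * l₁ * l₂ + s' * m₁ * m₂), s * l₂ ^ 2 + s' * m₂ ^ 2,
    ?_, ?_⟩
  · linear_combination s * (l₁ * a + l₂ * b + 1) * hl + s' * (m₁ * a + m₂ * b) * hm
  · linear_combination s * (l₁ * c + l₂ * d) * hl' + s' * (m₁ * c + m₂ * d + 1) * hm'

end BinaryForms

theorem eval_monic_allowed_cubic {R : Type*} [CommRing R]
    (a₁₀ a₀₁ a₂₀ a₁₁ a₀₂ a₃₀ a₀₃ t x y : R) :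
    eval ![t, x, y]
        (X 0 ^ 3 + C a₁₀ * X 0 ^ 2 * X 1 + C a₀₁ * X 0 ^ 2 * X 2 +
          C a₂₀ * X 0 * X 1 ^ 2 + C a₁₁ * X 0 * X 1 * X 2 + C a₀₂ * X 0 * X 2 ^ 2 +
          C a₃₀ * X 1 ^ 3 + C a₀₃ * X 2 ^ 3) =
      t ^ 3 + (a₁₀ * x + a₀₁ * y) * t ^ 2 + (a₂₀ * x ^ 2 + a₁₁ * (x * y) + a₀₂ * y ^ 2) * t +
        (a₃₀ * x ^ 3 + a₀₃ * y ^ 3) := by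
  simp only [map_add, map_mul, map_pow, eval_C, eval_X, Matrix.cons_val_zero,
    Matrix.cons_val_one, Matrix.cons_val_two, Matrix.head_cons, Matrix.tail_cons]
  ring

theorem exists_monic_cubic_through_three_and_off_point_general
    (a b c d u u₁ u₂ u₃ u₄ : ℂ)
    (ha : a ≠ 0) (hu : u ≠ 0)
    (hdet : a * d - b * c ≠ 0)
    (h₄₁ : u₄ ≠ u₁) (h₄₂ : u₄ ≠ u₂) (h₄₃ : u₄ ≠ u₃) :
    ∃ a₁₀ a₀₁ a₂₀ a₁₁ a₀₂ a₃₀ a₀₃ : ℂ,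
      ∀ F : MvPolynomial (Fin 3) ℂ,
        F = X 0 ^ 3 + C a₁₀ * X 0 ^ 2 * X 1 + C a₀₁ * X 0 ^ 2 * X 2 +
            C a₂₀ * X 0 * X 1 ^ 2 + C a₁₁ * X 0 * X 1 * X 2 + C a₀₂ * X 0 * X 2 ^ 2 +
            C a₃₀ * X 1 ^ 3 + C a₀₃ * X 2 ^ 3 →
        MvPolynomial.eval ![u₁, a, b] F = 0 ∧
        MvPolynomial.eval ![u₂, a, b] F = 0 ∧
        MvPolynomial.eval ![u₃, a, b] F = 0 ∧
        MvPolynomial.eval ![u, c, d] F = 0 ∧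
        MvPolynomial.eval ![u₄, a, b] F ≠ 0 := by
  set a₃₀ := -(u₁ * u₂ * u₃) / a ^ 3
  obtain ⟨a₁₀, a₀₁, hL, hL'⟩ := exists_linear_form_eq_of_det_ne_zero hdet (-(u₁ + u₂ + u₃)) 0
  obtain ⟨a₂₀, a₁₁, a₀₂, hQ, hQ'⟩ := exists_quadratic_form_eq_of_det_ne_zero hdet
    (u₁ * u₂ + u₁ * u₃ + u₂ * u₃) (-(u ^ 3 + a₃₀ * c ^ 3) / u)
  have hK : a₃₀ * a ^ 3 = -(u₁ * u₂ * u₃) := div_mul_cancel₀ _ (pow_ne_zero 3 ha)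
  have on_line (t : ℂ) : eval ![t, a, b]
      (X 0 ^ 3 + C a₁₀ * X 0 ^ 2 * X 1 + C a₀₁ * X 0 ^ 2 * X 2 +
        C a₂₀ * X 0 * X 1 ^ 2 + C a₁₁ * X 0 * X 1 * X 2 + C a₀₂ * X 0 * X 2 ^ 2 +
        C a₃₀ * X 1 ^ 3 + C 0 * X 2 ^ 3) = (t - u₁) * (t - u₂) * (t - u₃) := by
    rw [eval_monic_allowed_cubic]
    linear_combination t ^ 2 * hL + t * hQ + hK
  refine ⟨a₁₀, a₀₁, a₂₀, a₁₁, a₀₂, a₃₀, 0, fun F hF => ?_⟩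
  subst hF
  refine ⟨by rw [on_line]; ring, by rw [on_line]; ring, by rw [on_line]; ring, ?_, ?_⟩
  · rw [eval_monic_allowed_cubic, hL', hQ']
    field_simp
    ring
  · rw [on_line]
    exact mul_ne_zero (mul_ne_zero (sub_ne_zero.mpr h₄₁) (sub_ne_zero.mpr h₄₂))
      (sub_ne_zero.mpr h₄₃)

/-- The core construction in the proof of Lemma 3.3: a cubic which is monic in `U`,
supported on the allowed cubic monomials, vanishing at the three collinear points
`(uᵢ, a, b)`, `i = 1, 2, 3`, and at the off-line point `(u, c, d)`, but not at the
fourth collinear point `(u₄, a, b)`. Here `U = X 0`, `X = X 1`, `Y = X 2`. -/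
theorem exists_monic_cubic_through_three_and_off_point
    (a b c d u u₁ u₂ u₃ u₄ : ℂ)
    (ha : a ≠ 0) (hb : b ≠ 0) (hc : c ≠ 0) (hd : d ≠ 0) (hu : u ≠ 0)
    (hdet : a * d - b * c ≠ 0)
    (h₄₁ : u₄ ≠ u₁) (h₄₂ : u₄ ≠ u₂) (h₄₃ : u₄ ≠ u₃) :
    ∃ a₁₀ a₀₁ a₂₀ a₁₁ a₀₂ a₃₀ a₀₃ : ℂ,
      ∀ F : MvPolynomial (Fin 3) ℂ,
        F = X 0 ^ 3 + C a₁₀ * X 0 ^ 2 * X 1 + C a₀₁ * X 0 ^ 2 * X 2 +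
            C a₂₀ * X 0 * X 1 ^ 2 + C a₁₁ * X 0 * X 1 * X 2 + C a₀₂ * X 0 * X 2 ^ 2 +
            C a₃₀ * X 1 ^ 3 + C a₀₃ * X 2 ^ 3 →
        MvPolynomial.eval ![u₁, a, b] F = 0 ∧
        MvPolynomial.eval ![u₂, a, b] F = 0 ∧
        MvPolynomial.eval ![u₃, a, b] F = 0 ∧
        MvPolynomial.eval ![u, c, d] F = 0 ∧
        MvPolynomial.eval ![u₄, a, b] F ≠ 0 :=
  exists_monic_cubic_through_three_and_off_point_general a b c d u u₁ u₂ u₃ u₄ ha hu hdet h₄₁ h₄₂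
    h₄₃
end

section
/- Let m ≥ 1 and k ≥ 1 be integers, and let v₁, …, v_k be nonzero vectors in ℂ^{m+1} that are pairwise non-proportional (i.e., vᵢ is not a scalar multiple of v_j for i ≠ j). Then the linear map sending each homogeneous polynomial f of degree k − 1 in m + 1 variables over ℂ to the vector (f(v₁), …, f(v_k)) ∈ ℂ^k is surjective. -/
/-! A point `v i` not proportional to `v j` is separated from it by a linear form vanishing at
`v j`. The product of such forms over all `j ≠ i` is a form of degree `k - 1` vanishing exactly
at the other points, so every standard basis vector of `ℂᵏ` is a value of the evaluation map. -/

open MvPolynomial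

/-- The linear map sending a homogeneous polynomial `f` of degree `d` in `m + 1`
variables over `ℂ` to its vector of values `(f(v 0), …, f(v (k-1))) ∈ ℂᵏ`. -/
noncomputable def evalAtPointsMap (m k d : ℕ) (v : Fin k → (Fin (m + 1) → ℂ)) :
    homogeneousSubmodule (Fin (m + 1)) ℂ d →ₗ[ℂ] (Fin k → ℂ) :=
  (LinearMap.pi fun i => (MvPolynomial.aeval (v i)).toLinearMap).comp
    (homogeneousSubmodule (Fin (m + 1)) ℂ d).subtype

theorem Submodule.exists_dual_apply_eq_zero_of_notMem_span_singleton {K V : Type*} [Field K]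
    [AddCommGroup V] [Module K V] {x y : V} (hx : x ∉ Submodule.span K {y}) :
    ∃ φ : Module.Dual K V, φ y = 0 ∧ φ x ≠ 0 := by
  obtain ⟨φ, hφx, hφy⟩ := exists_dual_map_eq_bot_of_notMem hx inferInstance
  have hφy' := mem_map_of_mem (f := φ) (mem_span_singleton_self y)
  rw [hφy, mem_bot] at hφy'
  exact ⟨φ, hφy', hφx⟩

namespace Module.Dual

variable {R σ : Type*} [CommSemiring R] [Fintype σ] [DecidableEq σ]

noncomputable def toMvPolynomial (φ : Module.Dual R (σ → R)) : MvPolynomial σ R :=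
  ∑ a, C (φ (Pi.single a 1)) * X a

theorem isHomogeneous_toMvPolynomial (φ : Module.Dual R (σ → R)) :
    φ.toMvPolynomial.IsHomogeneous 1 :=
  IsHomogeneous.sum _ _ _ fun a _ => by
    simpa using (isHomogeneous_C _ (φ (Pi.single a 1))).mul (isHomogeneous_X _ a)

@[simp]
theorem eval_toMvPolynomial (φ : Module.Dual R (σ → R)) (x : σ → R) :
    MvPolynomial.eval x φ.toMvPolynomial = φ x := by
  conv_rhs => rw [← Finset.univ_sum_single x]
  simp only [toMvPolynomial, map_sum, map_mul, MvPolynomial.eval_C, MvPolynomial.eval_X]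
  refine Finset.sum_congr rfl fun a _ => ?_
  rw [mul_comm, ← smul_eq_mul, ← map_smul, ← Pi.single_smul', smul_eq_mul, mul_one]

end Module.Dual

namespace MvPolynomial

variable {K σ ι : Type*} [Field K] [Fintype σ] [Fintype ι] [DecidableEq ι]

theorem exists_isHomogeneous_eval_ne_zero_eval_eq_zero {v : ι → σ → K}
    (hv : ∀ i j, i ≠ j → v i ∉ Submodule.span K {v j}) (i : ι) :
    ∃ f : MvPolynomial σ K, f.IsHomogeneous (Fintype.card ι - 1) ∧
      eval (v i) f ≠ 0 ∧ ∀ l, l ≠ i → eval (v l) f = 0 := by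
  classical
  choose! φ hφ using fun j (hj : j ≠ i) =>
    Submodule.exists_dual_apply_eq_zero_of_notMem_span_singleton (hv i j hj.symm)
  refine ⟨∏ j ∈ Finset.univ.erase i, (φ j).toMvPolynomial, ?_, ?_, fun l hl => ?_⟩
  · simpa [Finset.card_erase_of_mem] using
      IsHomogeneous.prod (Finset.univ.erase i) _ (fun _ => 1) fun j _ =>
        (φ j).isHomogeneous_toMvPolynomial
  · simpa [Finset.prod_eq_zero_iff] using fun j hj => (hφ j hj).2
  · simpa [Finset.prod_eq_zero_iff] using ⟨l, hl, (hφ l hl).1⟩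

theorem exists_isHomogeneous_eval_eq_single {v : ι → σ → K}
    (hv : ∀ i j, i ≠ j → v i ∉ Submodule.span K {v j}) (i : ι) :
    ∃ f : MvPolynomial σ K, f.IsHomogeneous (Fintype.card ι - 1) ∧
      ∀ l, eval (v l) f = (Pi.single i 1 : ι → K) l := by
  obtain ⟨f, hf, hfi, hfl⟩ := exists_isHomogeneous_eval_ne_zero_eval_eq_zero hv i
  refine ⟨C (eval (v i) f)⁻¹ * f, by simpa using (isHomogeneous_C _ _).mul hf, fun l => ?_⟩
  rcases eq_or_ne l i with rfl | hl
  · simp [hfi]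
  · simp [hfl l hl, hl]

end MvPolynomial

theorem eval_map_degree_sub_one_surjective_general
    (m k : ℕ) (v : Fin k → (Fin (m + 1) → ℂ))
    (hprop : ∀ i j, i ≠ j → ∀ t : ℂ, v i ≠ t • v j) :
    Function.Surjective (evalAtPointsMap m k (k - 1) v) := by
  have hnotMem : ∀ i j, i ≠ j → v i ∉ Submodule.span ℂ {v j} := fun i j hij hmem => by
    obtain ⟨t, ht⟩ := Submodule.mem_span_singleton.1 hmem
    exact hprop i j hij t ht.symm
  have hsingle : ∀ i, Pi.single i 1 ∈ LinearMap.range (evalAtPointsMap m k (k - 1) v) := by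
    intro i
    obtain ⟨f, hf, hfv⟩ := exists_isHomogeneous_eval_eq_single hnotMem i
    refine ⟨⟨f, by simpa using hf⟩, funext fun l => ?_⟩
    simpa [evalAtPointsMap] using hfv l
  rw [← LinearMap.range_eq_top, eq_top_iff, ← (Pi.basisFun ℂ (Fin k)).span_eq,
    Submodule.span_le]
  rintro _ ⟨i, rfl⟩
  simpa using hsingle i

/-- A reduced finite scheme of `k` distinct points in `ℙᵐ` is `(k-1)`-normal:
the evaluation map on degree-`(k-1)` forms is surjective. -/
theorem eval_map_degree_sub_one_surjective
    (m k : ℕ) (hm : 1 ≤ m) (hk : 1 ≤ k) (v : Fin k → (Fin (m + 1) → ℂ))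
    (hv : ∀ i, v i ≠ 0)
    (hprop : ∀ i j, i ≠ j → ∀ t : ℂ, v i ≠ t • v j) :
    Function.Surjective (evalAtPointsMap m k (k - 1) v) :=
  eval_map_degree_sub_one_surjective_general m k v hprop
end

section
/- Let m ≥ 1 and k ≥ 2 be integers, and let v₁, …, v_k be nonzero vectors in ℂ^{m+1} that are pairwise non-proportional. Then the linear map sending each homogeneous polynomial f of degree k − 2 in m + 1 variables over ℂ to the vector (f(v₁), …, f(v_k)) ∈ ℂ^k fails to be surjective if and only if the linear span of {v₁, …, v_k} in ℂ^{m+1} has dimension at most 2 (equivalently, the corresponding k points of ℙ^m all lie on a single line). -/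
open MvPolynomial

/-!
If the vectors span a space of dimension at least `3`, then for each `i` there are two other
points `v j₁, v j₂` whose span misses `v i`. A linear form vanishing on `v j₁, v j₂` times one
linear form through each of the remaining `k - 3` points is a form of degree `k - 2` that vanishes
at every `v j` except `v i`, so evaluation is onto.

If instead all `v i = a i • y₀ + b i • y₁` lie in a plane, a form `f` of degree `d` pulls back to
a binary form, so `f (v i) = ∑ₜ cₜ (a i)ᵗ (b i)ᵈ⁻ᵗ`: the image lies in the span of `d + 1 = k - 1`
vectors and cannot be all of `ℂᵏ`.
-/

open Module Submodule
open scoped Matrix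

section LinearAlgebra

variable {K V ι : Type*} [DivisionRing K] [AddCommGroup V] [Module K V]

theorem Submodule.exists_le_span_range_fin_two {W : Submodule K V} [FiniteDimensional K W]
    (hW : finrank K W ≤ 2) : ∃ y : Fin 2 → V, W ≤ span K (Set.range y) := by
  have : FiniteDimensional K (span K (W : Set V)) := by rwa [span_eq]
  obtain ⟨b, -, hb, -⟩ := exists_fun_fin_finrank_span_eq K (W : Set V)
  have hr : finrank K (span K (W : Set V)) ≤ 2 := by rwa [span_eq]
  refine ⟨Function.extend (Fin.castLE hr) b 0, ?_⟩
  calc W = span K (Set.range b) := by rw [hb, span_eq]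
    _ ≤ _ := span_mono <| by
      rintro _ ⟨s, rfl⟩
      exact ⟨_, (Fin.castLE_injective hr).extend_apply b 0 s⟩

theorem exists_notMem_span_pair_of_three_le_finrank {v : ι → V}
    (hv : Pairwise fun i j => v i ∉ K ∙ v j) (h3 : 3 ≤ finrank K (span K (Set.range v)))
    (i : ι) : ∃ j₁ j₂, j₁ ≠ i ∧ j₂ ≠ i ∧ j₁ ≠ j₂ ∧ v i ∉ span K {v j₁, v j₂} := by
  classical
  have not_le_span_pair (j₀ : ι) (hle : span K (Set.range v) ≤ span K {v i, v j₀}) : False := by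
    have : FiniteDimensional K (span K {v i, v j₀}) := .span_of_finite K (Set.toFinite _)
    have hcard := finrank_span_le_card (R := K) ({v i, v j₀} : Set V)
    simp only [Set.toFinset_insert, Set.toFinset_singleton] at hcard
    have := Finset.card_le_two (a := v i) (b := v j₀)
    have := Submodule.finrank_mono hle
    omega
  obtain ⟨j₀, hj₀⟩ : ∃ j₀, j₀ ≠ i := by
    by_contra! h
    exact not_le_span_pair i <| span_le.mpr <| by
      rintro _ ⟨j, rfl⟩
      exact subset_span (by simp [h j])
  by_contra! h
  -- exchange `v i` for `v j` in `v i ∈ span {v j, v j₀}`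
  refine not_le_span_pair j₀ <| span_le.mpr ?_
  rintro _ ⟨j, rfl⟩
  by_cases hji : j = i
  · exact subset_span (by simp [hji])
  by_cases hjj₀ : j = j₀
  · exact subset_span (by simp [hjj₀])
  exact mem_span_insert_exchange (h j j₀ hji hj₀ hjj₀) (hv hj₀.symm)

theorem LinearMap.surjective_of_forall_exists_apply_ne_zero {M : Type*} [AddCommGroup M]
    [Module K M] [Finite ι] (L : M →ₗ[K] ι → K)
    (h : ∀ i, ∃ x, L x i ≠ 0 ∧ ∀ j ≠ i, L x j = 0) : Function.Surjective L := by
  classical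
  rw [← LinearMap.range_eq_top, eq_top_iff, ← (Pi.basisFun K ι).span_eq, span_le]
  rintro _ ⟨i, rfl⟩
  obtain ⟨x, hxi, hx⟩ := h i
  refine ⟨(L x i)⁻¹ • x, funext fun j => ?_⟩
  by_cases hji : j = i
  · subst hji; simp [hxi]
  · simp [hji, hx j hji]

end LinearAlgebra

namespace MvPolynomial

section Pullback

variable {R σ τ : Type*} [CommSemiring R] [Fintype τ]

theorem IsHomogeneous.bind₁_toMvPolynomial {f : MvPolynomial σ R} {d : ℕ}
    (hf : f.IsHomogeneous d) (A : Matrix σ τ R) : (bind₁ A.toMvPolynomial f).IsHomogeneous d := by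
  simpa using hf.aeval _ A.toMvPolynomial_isHomogeneous

theorem aeval_bind₁_toMvPolynomial (A : Matrix σ τ R) (f : MvPolynomial σ R) (c : τ → R) :
    aeval c (bind₁ A.toMvPolynomial f) = aeval (A *ᵥ c) f := by
  rw [aeval_bind₁]
  congr 2 with s
  simpa using A.toMvPolynomial_eval_eq_apply s c

end Pullback

theorem IsHomogeneous.aeval_mem_span_pow_mul_pow {R ι : Type*} [CommRing R]
    {g : MvPolynomial (Fin 2) R} {d : ℕ} (hg : g.IsHomogeneous d) (p : ι → Fin 2 → R) :
    (fun i => MvPolynomial.aeval (p i) g) ∈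
      span R (Set.range fun t : Fin (d + 1) => fun i => p i 0 ^ (t : ℕ) * p i 1 ^ (d - t)) := by
  let E : MvPolynomial (Fin 2) R →ₗ[R] ι → R :=
    LinearMap.pi fun i => (MvPolynomial.aeval (p i)).toLinearMap
  suffices homogeneousSubmodule (Fin 2) R d ≤ (span R _).comap E from this hg
  rw [homogeneousSubmodule_eq_finsupp_supported, AddMonoidAlgebra.supported_eq_span_single,
    span_le]
  rintro _ ⟨s, hs, rfl⟩
  have hs : s 0 + s 1 = d := by simpa [Finsupp.degree_eq_sum] using hs
  refine subset_span ⟨⟨s 0, by omega⟩, ?_⟩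
  ext i
  simp [E, single_eq_monomial, aeval_monomial, Finsupp.prod_fintype, ← hs]

variable {K σ ι : Type*} [Field K] [Fintype σ]

theorem exists_isHomogeneous_one_aeval_ne_zero_of_notMem {W : Submodule K (σ → K)} {x : σ → K}
    (hx : x ∉ W) :
    ∃ p : MvPolynomial σ K, p.IsHomogeneous 1 ∧ aeval x p ≠ 0 ∧ ∀ w ∈ W, aeval w p = 0 := by
  classical
  obtain ⟨f, hfx, hfW⟩ := W.exists_dual_map_eq_bot_of_notMem hx inferInstance
  let A : Matrix Unit σ K := LinearMap.toMatrix' (LinearMap.pi fun _ => f)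
  have hA : ∀ y, aeval y (A.toMvPolynomial ()) = f y := fun y => by
    simpa [A] using A.toMvPolynomial_eval_eq_apply () y
  refine ⟨_, A.toMvPolynomial_isHomogeneous (), by rwa [hA], fun w hw => ?_⟩
  rw [hA]
  exact (Submodule.eq_bot_iff _).mp hfW _ (mem_map_of_mem hw)

theorem exists_isHomogeneous_card_aeval_ne_zero (x : σ → K) (w : ι → σ → K) (T : Finset ι)
    (hT : ∀ j ∈ T, x ∉ K ∙ w j) :
    ∃ p : MvPolynomial σ K, p.IsHomogeneous T.card ∧ aeval x p ≠ 0 ∧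
      ∀ j ∈ T, aeval (w j) p = 0 := by
  choose! ℓ hℓ hℓx hℓw using fun j hj =>
    exists_isHomogeneous_one_aeval_ne_zero_of_notMem (hT j hj)
  refine ⟨∏ j ∈ T, ℓ j, ?_, ?_, fun j hj => ?_⟩
  · simpa using IsHomogeneous.prod T ℓ (fun _ => 1) hℓ
  · rw [map_prod]
    exact Finset.prod_ne_zero_iff.mpr hℓx
  · rw [map_prod]
    exact Finset.prod_eq_zero hj (hℓw j hj _ (mem_span_singleton_self _))

-- A single linear form vanishes at both `v j₁` and `v j₂`; this is what brings the degree down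
-- from `card ι - 1` to `card ι - 2`.
theorem exists_isHomogeneous_card_sub_two_aeval_ne_zero [Fintype ι] {v : ι → σ → K}
    (hv : Pairwise fun i j => v i ∉ K ∙ v j) (h3 : 3 ≤ finrank K (span K (Set.range v))) (i : ι) :
    ∃ p : MvPolynomial σ K, p.IsHomogeneous (Fintype.card ι - 2) ∧ aeval (v i) p ≠ 0 ∧
      ∀ j ≠ i, aeval (v j) p = 0 := by
  classical
  obtain ⟨j₁, j₂, h₁, h₂, h₁₂, hi⟩ := exists_notMem_span_pair_of_three_le_finrank hv h3 i
  obtain ⟨ℓ, hℓ, hℓi, hℓ₁₂⟩ := exists_isHomogeneous_one_aeval_ne_zero_of_notMem hi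
  set T : Finset ι := Finset.univ \ {i, j₁, j₂}
  have hTi : ∀ j ∈ T, j ≠ i := fun j hj => by simp_all [T]
  obtain ⟨q, hq, hqi, hqT⟩ :=
    exists_isHomogeneous_card_aeval_ne_zero (v i) v T fun j hj => hv (hTi j hj).symm
  have hT : 1 + T.card = Fintype.card ι - 2 := by
    have h3 : ({i, j₁, j₂} : Finset ι).card = 3 := by
      rw [Finset.card_insert_of_notMem (by simp [h₁.symm, h₂.symm]), Finset.card_pair h₁₂]
    have := Finset.card_le_univ ({i, j₁, j₂} : Finset ι)
    rw [Finset.card_univ_sdiff, h3]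
    omega
  refine ⟨ℓ * q, hT ▸ hℓ.mul hq, by rw [map_mul]; exact mul_ne_zero hℓi hqi, fun j hj => ?_⟩
  by_cases hjT : j ∈ T
  · rw [map_mul, hqT j hjT, mul_zero]
  · have hj₁₂ : j = j₁ ∨ j = j₂ := by
      simp only [T, Finset.mem_sdiff, Finset.mem_univ, Finset.mem_insert, Finset.mem_singleton,
        true_and, not_or, not_and_or, not_not] at hjT
      tauto
    have : v j ∈ span K {v j₁, v j₂} := subset_span (by rcases hj₁₂ with rfl | rfl <;> simp)
    rw [map_mul, hℓ₁₂ _ this, zero_mul]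

end MvPolynomial

variable {m k : ℕ} {v : Fin k → Fin (m + 1) → ℂ}

theorem evalAtPointsMap_surjective (hv : Pairwise fun i j => v i ∉ ℂ ∙ v j)
    (h3 : 3 ≤ finrank ℂ (span ℂ (Set.range v))) :
    Function.Surjective (evalAtPointsMap m k (k - 2) v) :=
  LinearMap.surjective_of_forall_exists_apply_ne_zero _ fun i => by
    obtain ⟨p, hp, hpi, hpj⟩ := exists_isHomogeneous_card_sub_two_aeval_ne_zero hv h3 i
    exact ⟨⟨p, by simpa using hp⟩, hpi, hpj⟩

theorem finrank_range_evalAtPointsMap_le (d : ℕ) (y : Fin 2 → Fin (m + 1) → ℂ)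
    (hy : ∀ i, v i ∈ span ℂ (Set.range y)) :
    finrank ℂ (LinearMap.range (evalAtPointsMap m k d v)) ≤ d + 1 := by
  choose p hp using fun i => (mem_span_range_iff_exists_fun ℂ).mp (hy i)
  have hA : ∀ i, (Matrix.of y)ᵀ *ᵥ p i = v i := fun i => by
    rw [Matrix.mulVec_transpose, Matrix.vecMul_eq_sum, ← hp]
    rfl
  calc finrank ℂ (LinearMap.range (evalAtPointsMap m k d v))
      ≤ finrank ℂ (span ℂ (Set.range fun t : Fin (d + 1) =>
          fun i => p i 0 ^ (t : ℕ) * p i 1 ^ (d - t))) := by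
        refine Submodule.finrank_mono ?_
        rintro _ ⟨⟨f, hf⟩, rfl⟩
        convert (IsHomogeneous.bind₁_toMvPolynomial hf (Matrix.of y)ᵀ).aeval_mem_span_pow_mul_pow p
          using 2 with i
        rw [aeval_bind₁_toMvPolynomial, hA]
        rfl
    _ ≤ d + 1 := (finrank_range_le_card _).trans (by simp)

theorem evalAtPointsMap_not_surjective (hk : 2 ≤ k) (h2 : finrank ℂ (span ℂ (Set.range v)) ≤ 2) :
    ¬ Function.Surjective (evalAtPointsMap m k (k - 2) v) := by
  intro hs
  obtain ⟨y, hy⟩ := exists_le_span_range_fin_two h2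
  have := finrank_range_evalAtPointsMap_le (k - 2) y fun i => hy (subset_span ⟨i, rfl⟩)
  rw [LinearMap.range_eq_top.mpr hs, finrank_top, finrank_fin_fun] at this
  omega

theorem eval_map_degree_sub_two_not_surjective_iff_general
    (m k : ℕ) (hk : 2 ≤ k) (v : Fin k → (Fin (m + 1) → ℂ))
    (hprop : ∀ i j, i ≠ j → ∀ t : ℂ, v i ≠ t • v j) :
    ¬ Function.Surjective (evalAtPointsMap m k (k - 2) v) ↔
      Module.finrank ℂ ↥(Submodule.span ℂ (Set.range v)) ≤ 2 := by
  have hv : Pairwise fun i j => v i ∉ ℂ ∙ v j := fun i j hij h => by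
    obtain ⟨t, ht⟩ := mem_span_singleton.mp h
    exact hprop i j hij t ht.symm
  refine ⟨fun hns => ?_, evalAtPointsMap_not_surjective hk⟩
  by_contra! h3
  exact hns (evalAtPointsMap_surjective hv h3)

/-- A reduced finite scheme of `k` distinct points in `ℙᵐ` fails to be
`(k-2)`-normal if and only if the points lie on a line, i.e. the corresponding
vectors span a subspace of `ℂ^{m+1}` of dimension at most `2`. -/
theorem eval_map_degree_sub_two_not_surjective_iff
    (m k : ℕ) (hm : 1 ≤ m) (hk : 2 ≤ k) (v : Fin k → (Fin (m + 1) → ℂ))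
    (hv : ∀ i, v i ≠ 0)
    (hprop : ∀ i j, i ≠ j → ∀ t : ℂ, v i ≠ t • v j) :
    ¬ Function.Surjective (evalAtPointsMap m k (k - 2) v) ↔
      Module.finrank ℂ ↥(Submodule.span ℂ (Set.range v)) ≤ 2 :=
  eval_map_degree_sub_two_not_surjective_iff_general m k hk v hprop
end
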